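/- arXiv:2203.13990 — 3 statements merged into one kernel-verified Lean document; each statement's English description precedes it below -/
import Mathlib

section
/- Let n ≥ 1 and fix vectors v_1, …, v_{n+1} ∈ ℝ^n with ⟪v_i, v_j⟫ = 1 if i = j and −1/n if i ≠ j, and let △^n = conv{v_1, …, v_{n+1}}. Then vol(△^n) · vol((△^n)°) = (n+1)^{n+1} / (n!)^2. -/
/-!
A point `y` lies in the polar of `△ = conv{v_i}` iff `⟪v_i, y⟫ ≤ 1` for all `i`. Since
`∑ v_i = 0` and the `v_i` span the space, the weights `t_i = (1 - ⟪v_i, y⟫) / (n + 1)` are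
barycentric coordinates of `-y / n`, so `△° = -n • △` and the product is `nⁿ vol(△)²`. With
`w_i = v_{i+1} - v_0`, `△` is a translate of the image of the corner simplex
`{x ≥ 0, ∑ x_i ≤ 1}` (of volume `1 / n!`) under the linear map `e_i ↦ w_i`, so
`vol(△)² = det (gram w) / (n!)²`, and `gram w = (1 + 1/n) (I + J)` has determinant
`(1 + 1/n)ⁿ (n + 1)`.
-/

open MeasureTheory
open scoped ENNReal

noncomputable section

def polarBody {n : ℕ} (K : Set (EuclideanSpace ℝ (Fin n))) : Set (EuclideanSpace ℝ (Fin n)) :=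
  {y | ∀ x ∈ K, inner ℝ x y ≤ (1 : ℝ)}

open Module Matrix
open scoped RealInnerProductSpace Pointwise

def cornerSimplex (n : ℕ) (c : ℝ) : Set (Fin n → ℝ) :=
  {x | (∀ i, 0 ≤ x i) ∧ ∑ i, x i ≤ c}

lemma measurableSet_cornerSimplex (n : ℕ) (c : ℝ) : MeasurableSet (cornerSimplex n c) := by
  simp only [cornerSimplex, Set.ofPred_and, Set.ofPred_forall]
  exact (MeasurableSet.iInter fun i => measurableSet_le measurable_const (measurable_pi_apply i))
    |>.inter (measurableSet_le (by fun_prop) measurable_const)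

lemma cornerSimplex_eq_empty {n : ℕ} {c : ℝ} (hc : c < 0) : cornerSimplex n c = ∅ :=
  Set.eq_empty_of_forall_notMem fun _ hx =>
    (hc.trans_le (Finset.sum_nonneg fun i _ => hx.1 i)).not_ge hx.2

lemma cornerSimplex_succ (n : ℕ) (c : ℝ) :
    cornerSimplex (n + 1) c = MeasurableEquiv.piFinSuccAbove (fun _ => ℝ) 0 ⁻¹'
      {p | 0 ≤ p.1 ∧ p.2 ∈ cornerSimplex n (c - p.1)} := by
  ext x
  simp [cornerSimplex, Fin.forall_fin_succ, Fin.sum_univ_succ, le_sub_iff_add_le', and_assoc,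
    Fin.tail]

lemma convex_cornerSimplex (n : ℕ) (c : ℝ) : Convex ℝ (cornerSimplex n c) := by
  rintro x ⟨hx0, hx⟩ y ⟨hy0, hy⟩ a b ha hb hab
  refine ⟨fun i => ?_, ?_⟩
  · simp only [Pi.add_apply, Pi.smul_apply, smul_eq_mul]
    positivity [hx0 i, hy0 i]
  · simp only [Pi.add_apply, Pi.smul_apply, smul_eq_mul, Finset.sum_add_distrib, ← Finset.mul_sum]
    calc a * ∑ i, x i + b * ∑ i, y i ≤ a * c + b * c := by gcongr
      _ = c := by rw [← add_mul, hab, one_mul]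

lemma convexHull_insert_zero_range_single (n : ℕ) :
    convexHull ℝ (insert 0 (Set.range fun i : Fin n => Pi.single i (1 : ℝ))) =
      cornerSimplex n 1 := by
  refine (convexHull_min ?_ (convex_cornerSimplex n 1)).antisymm fun x ⟨hx0, hx⟩ => ?_
  · rintro _ (rfl | ⟨i, rfl⟩)
    · simp [cornerSimplex]
    · exact ⟨fun j => by simp only [Pi.single_apply]; split_ifs <;> norm_num, by simp⟩
  · have hmem := (convex_convexHull ℝ
        (insert 0 (Set.range fun i : Fin n => Pi.single i (1 : ℝ)))).sum_mem (t := Finset.univ)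
      (w := Fin.cons (1 - ∑ i, x i) x) (z := Fin.cons 0 fun i => Pi.single i (1 : ℝ))
      (fun i _ => by cases i using Fin.cases <;> simp [hx, hx0])
      (by simp [Fin.sum_univ_succ])
      (fun i _ => subset_convexHull ℝ _ (by rw [← Fin.range_cons]; exact Set.mem_range_self i))
    simpa [Fin.sum_univ_succ, ← pi_eq_sum_univ'] using hmem

lemma volume_cornerSimplex (n : ℕ) {c : ℝ} (hc : 0 ≤ c) :
    volume (cornerSimplex n c) = ENNReal.ofReal (c ^ n / n.factorial) := by
  induction n generalizing c with
  | zero => simp [cornerSimplex, hc, volume_pi]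
  | succ n ih =>
    set T := {p : ℝ × (Fin n → ℝ) | 0 ≤ p.1 ∧ p.2 ∈ cornerSimplex n (c - p.1)}
    have hT : MeasurableSet T := by
      simp only [T, cornerSimplex, Set.ofPred_and, Set.ofPred_forall]
      measurability
    have hslice (a : ℝ) : volume (Prod.mk a ⁻¹' T) =
        (Set.Icc 0 c).indicator (fun a => ENNReal.ofReal ((c - a) ^ n / n.factorial)) a := by
      by_cases ha : 0 ≤ a
      · rcases le_or_gt a c with hac | hca
        · rw [Set.indicator_of_mem (Set.mem_Icc.2 ⟨ha, hac⟩), ← ih (sub_nonneg.2 hac)]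
          congr 1
          ext y
          simp [T, ha]
        · simp [T, ha, hca.not_ge, cornerSimplex_eq_empty (sub_neg.2 hca)]
      · simp [T, ha]
    rw [cornerSimplex_succ, volume_pi,
      (measurePreserving_piFinSuccAbove (fun _ => volume) 0).measure_preimage hT.nullMeasurableSet,
      Measure.prod_apply hT]
    simp only [← volume_pi, hslice]
    rw [lintegral_indicator measurableSet_Icc, ← ofReal_integral_eq_lintegral_ofReal
      (by fun_prop : Continuous fun a : ℝ => (c - a) ^ n / n.factorial).integrableOn_Icc
      ((ae_restrict_mem measurableSet_Icc).mono fun a ha => by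
        have := sub_nonneg.2 ha.2; positivity),
      integral_Icc_eq_integral_Ioc, ← intervalIntegral.integral_of_le hc,
      intervalIntegral.integral_div, intervalIntegral.integral_comp_sub_left (· ^ n),
      sub_self, sub_zero, integral_pow, Nat.factorial_succ]
    push_cast
    rw [zero_pow n.succ_ne_zero, sub_zero, div_div]

theorem volume_convexHull_insert_zero {F : Type*} [NormedAddCommGroup F] [InnerProductSpace ℝ F]
    [FiniteDimensional ℝ F] [MeasurableSpace F] [BorelSpace F] {n : ℕ} (hF : finrank ℝ F = n)
    (w : Fin n → F) :
    volume (convexHull ℝ (insert 0 (Set.range w))) =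
      ENNReal.ofReal (√(gram ℝ w).det / n.factorial) := by
  let b : OrthonormalBasis (Fin n) ℝ F := (stdOrthonormalBasis ℝ F).reindex (finCongr hF)
  let φ : F ≃ₗ[ℝ] (Fin n → ℝ) :=
    b.repr.toLinearEquiv.trans (WithLp.linearEquiv 2 ℝ (Fin n → ℝ))
  let T : F →ₗ[ℝ] F := Fintype.linearCombination ℝ w ∘ₗ φ.toLinearMap
  have hφ : MeasurePreserving φ := (PiLp.volume_preserving_ofLp _).comp b.measurePreserving_repr
  have hTb (i : Fin n) : T (b i) = w i := by simp [T, φ]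
  have hhull : convexHull ℝ (insert 0 (Set.range w)) = T '' (φ ⁻¹' cornerSimplex n 1) := by
    rw [show ⇑T = Fintype.linearCombination ℝ w ∘ φ from rfl, Set.image_comp,
      Set.image_preimage_eq _ φ.surjective, ← convexHull_insert_zero_range_single,
      LinearMap.image_convexHull, Set.image_insert_eq, map_zero, ← Set.range_comp]
    simp [Function.comp_def, Fintype.linearCombination_apply_single]
  have hdet : |LinearMap.det T| = √(gram ℝ w).det := by
    have h := T.normDet_sq_eq_det_gram b
    simp only [hTb, RCLike.ofReal_real_eq_id, id] at h
    rw [← LinearMap.normDet_eq_abs_det, ← h, Real.sqrt_sq T.normDet_nonneg]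
  rw [hhull, Measure.addHaar_image_linearMap,
    hφ.measure_preimage (measurableSet_cornerSimplex n 1).nullMeasurableSet,
    volume_cornerSimplex n zero_le_one, hdet, ← ENNReal.ofReal_mul (Real.sqrt_nonneg _), one_pow,
    mul_one_div]

theorem convexHull_range_eq_image_stdSimplex {ι E : Type*} [Fintype ι] [AddCommGroup E]
    [Module ℝ E] (v : ι → E) :
    convexHull ℝ (Set.range v) = Fintype.linearCombination ℝ v '' stdSimplex ℝ ι := by
  classical
  rw [← convexHull_rangle_single_eq_stdSimplex, LinearMap.image_convexHull, ← Set.range_comp]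
  simp [Function.comp_def, Fintype.linearCombination_apply_single]

theorem convexHull_range_eq_vadd_convexHull_insert_zero {E : Type*} [AddCommGroup E] [Module ℝ E]
    {n : ℕ} (v : Fin (n + 1) → E) :
    convexHull ℝ (Set.range v) =
      v 0 +ᵥ convexHull ℝ (insert 0 (Set.range fun i : Fin n => v i.succ - v 0)) := by
  rw [← convexHull_vadd, Set.vadd_set_insert, Set.vadd_set_range, ← Fin.range_cons]
  congr 2
  ext i
  cases i using Fin.cases <;> simp

section RegularSimplex

variable {F : Type*} [NormedAddCommGroup F] [InnerProductSpace ℝ F] {n : ℕ}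
  {v : Fin (n + 1) → F}

theorem inner_sum_smul_of_inner_eq
    (hv : ∀ i j, ⟪v i, v j⟫ = if i = j then (1 : ℝ) else -1 / n) (t : Fin (n + 1) → ℝ)
    (i : Fin (n + 1)) :
    ⟪v i, ∑ j, t j • v j⟫ = (1 + 1 / n) * t i - (∑ j, t j) / n := by
  have h (j : Fin (n + 1)) : t j * (if i = j then (1 : ℝ) else -1 / n) =
      -t j / n + if i = j then (1 + 1 / n) * t j else 0 := by
    split_ifs <;> ring
  simp only [inner_sum, real_inner_smul_right, hv]
  rw [Finset.sum_congr rfl fun j _ => h j, Finset.sum_add_distrib, Finset.sum_ite_eq,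
    if_pos (Finset.mem_univ _), Finset.sum_div]
  simp only [neg_div, Finset.sum_neg_distrib]
  ring

theorem sum_eq_zero_of_inner_eq (hn : n ≠ 0)
    (hv : ∀ i j, ⟪v i, v j⟫ = if i = j then (1 : ℝ) else -1 / n) :
    ∑ i, v i = 0 := by
  have h (i : Fin (n + 1)) : ⟪v i, ∑ j, v j⟫ = 0 := by
    have := inner_sum_smul_of_inner_eq hv 1 i
    simp only [Pi.one_apply, one_smul, Finset.sum_const, Finset.card_univ, Fintype.card_fin,
      nsmul_eq_mul, mul_one] at this
    rw [this]
    field_simp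
    push_cast
    ring
  rw [← inner_self_eq_zero (𝕜 := ℝ), sum_inner]
  exact Finset.sum_eq_zero fun i _ => h i

theorem inner_neg_smul_sum_of_inner_eq (hn : n ≠ 0)
    (hv : ∀ i j, ⟪v i, v j⟫ = if i = j then (1 : ℝ) else -1 / n) {t : Fin (n + 1) → ℝ}
    (ht : ∑ j, t j = 1) (i : Fin (n + 1)) :
    ⟪v i, (-(n : ℝ)) • ∑ j, t j • v j⟫ = 1 - (n + 1) * t i := by
  rw [real_inner_smul_right, inner_sum_smul_of_inner_eq hv, ht]
  field_simp
  ring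

theorem gram_succ_sub_zero_of_inner_eq
    (hv : ∀ i j, ⟪v i, v j⟫ = if i = j then (1 : ℝ) else -1 / n) :
    gram ℝ (fun i : Fin n => v i.succ - v 0) = (1 + 1 / n : ℝ) • (1 + vecMulVec 1 1) := by
  ext i j
  simp only [gram_apply, inner_sub_left, inner_sub_right, hv, Fin.succ_inj, Fin.succ_ne_zero,
    (Fin.succ_ne_zero _).symm, if_true, if_false, Matrix.smul_apply, Matrix.add_apply, one_apply,
    vecMulVec_apply, Pi.one_apply, mul_one, smul_eq_mul]
  split_ifs <;> ring

theorem det_gram_succ_sub_zero_of_inner_eq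
    (hv : ∀ i j, ⟪v i, v j⟫ = if i = j then (1 : ℝ) else -1 / n) :
    (gram ℝ (fun i : Fin n => v i.succ - v 0)).det = (1 + 1 / n) ^ n * (n + 1) := by
  rw [gram_succ_sub_zero_of_inner_eq hv, det_smul, vecMulVec_eq (Fin 1),
    det_one_add_replicateCol_mul_replicateRow]
  simp [add_comm]

theorem ext_inner_left_of_inner_eq [FiniteDimensional ℝ F] (hF : finrank ℝ F = n) (hn : n ≠ 0)
    (hv : ∀ i j, ⟪v i, v j⟫ = if i = j then (1 : ℝ) else -1 / n) {x y : F}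
    (h : ∀ i, ⟪v i, x⟫ = ⟪v i, y⟫) : x = y := by
  have : Nonempty (Fin n) := ⟨⟨0, Nat.pos_of_ne_zero hn⟩⟩
  have hdet : (gram ℝ (fun i : Fin n => v i.succ - v 0)).det ≠ 0 := by
    rw [det_gram_succ_sub_zero_of_inner_eq hv]
    positivity
  refine InnerProductSpace.ext_inner_left_basis (basisOfLinearIndependentOfCardEqFinrank
    (linearIndependent_of_det_gram_ne_zero hdet) (by simp [hF])) fun i => ?_
  simp [inner_sub_left, h]

theorem volume_convexHull_of_inner_eq [FiniteDimensional ℝ F] [MeasurableSpace F] [BorelSpace F]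
    (hF : finrank ℝ F = n) (hv : ∀ i j, ⟪v i, v j⟫ = if i = j then (1 : ℝ) else -1 / n) :
    volume (convexHull ℝ (Set.range v)) =
      ENNReal.ofReal (√((1 + 1 / n) ^ n * (n + 1)) / n.factorial) := by
  rw [convexHull_range_eq_vadd_convexHull_insert_zero, measure_vadd,
    volume_convexHull_insert_zero hF, det_gram_succ_sub_zero_of_inner_eq hv]

end RegularSimplex

theorem polarBody_convexHull {n : ℕ} (s : Set (EuclideanSpace ℝ (Fin n))) :
    polarBody (convexHull ℝ s) = {y | ∀ x ∈ s, ⟪x, y⟫ ≤ 1} := by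
  ext y
  refine ⟨fun hy x hx => hy x (subset_convexHull ℝ s hx), fun hy => convexHull_min hy ?_⟩
  exact convex_halfSpace_le (f := fun x => ⟪x, y⟫)
    ⟨(inner_add_left · · y), fun c x => real_inner_smul_left x y c⟩ (1 : ℝ)

theorem polarBody_convexHull_eq_neg_smul {n : ℕ} (hn : n ≠ 0)
    {v : Fin (n + 1) → EuclideanSpace ℝ (Fin n)}
    (hv : ∀ i j, ⟪v i, v j⟫ = if i = j then (1 : ℝ) else -1 / n) :
    polarBody (convexHull ℝ (Set.range v)) = (-(n : ℝ)) • convexHull ℝ (Set.range v) := by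
  ext y
  rw [polarBody_convexHull]
  simp only [Set.forall_mem_range, Set.mem_ofPred_eq, convexHull_range_eq_image_stdSimplex,
    Set.mem_smul_set, Set.exists_mem_image, Fintype.linearCombination_apply]
  constructor
  · intro hy
    have hsum : ∑ i, ⟪v i, y⟫ = 0 := by
      rw [← sum_inner, sum_eq_zero_of_inner_eq hn hv, inner_zero_left]
    set t : Fin (n + 1) → ℝ := fun i => (1 - ⟪v i, y⟫) / (n + 1)
    have ht : ∑ i, t i = 1 := by
      simp only [t, ← Finset.sum_div, Finset.sum_sub_distrib, hsum]
      simp [Nat.cast_add_one_ne_zero]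
    refine ⟨t, ⟨fun i => div_nonneg (sub_nonneg.2 (hy i)) (by positivity), ht⟩, ?_⟩
    refine ext_inner_left_of_inner_eq finrank_euclideanSpace_fin hn hv fun i => ?_
    rw [inner_neg_smul_sum_of_inner_eq hn hv ht]
    simp only [t]
    field_simp
    ring
  · rintro ⟨t, ht, rfl⟩ i
    rw [inner_neg_smul_sum_of_inner_eq hn hv ht.2]
    nlinarith [ht.1 i]

theorem stmt12 (n : ℕ) (hn : 1 ≤ n) (v : Fin (n + 1) → EuclideanSpace ℝ (Fin n))
    (hv : ∀ i j : Fin (n + 1), inner ℝ (v i) (v j) = if i = j then (1 : ℝ) else -1 / n) :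
    volume (convexHull ℝ (Set.range v)) * volume (polarBody (convexHull ℝ (Set.range v)))
      = ((n : ℝ≥0∞) + 1) ^ (n + 1) / (n.factorial : ℝ≥0∞) ^ 2 := by
  have hF : finrank ℝ (EuclideanSpace ℝ (Fin n)) = n := finrank_euclideanSpace_fin
  have hn0 : (n : ℝ) ≠ 0 := by positivity
  have hvol : √((1 + 1 / n) ^ n * (n + 1)) / n.factorial *
      (|(-(n : ℝ)) ^ n| * (√((1 + 1 / n) ^ n * (n + 1)) / n.factorial)) =
      (n + 1) ^ (n + 1) / n.factorial ^ 2 := by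
    rw [abs_pow, abs_neg, Nat.abs_cast]
    field_simp
    rw [Real.sq_sqrt (by positivity), div_pow]
    field_simp
    ring
  rw [polarBody_convexHull_eq_neg_smul (by omega) hv, Measure.addHaar_smul, hF,
    volume_convexHull_of_inner_eq hF hv, ← ENNReal.ofReal_mul (abs_nonneg _),
    ← ENNReal.ofReal_mul (by positivity), hvol, ENNReal.ofReal_div_of_pos (by positivity)]
  norm_cast
end
end

section
/- Let n ≥ 3, let a_1, …, a_{n−1} ∈ ℝ^n, let x ∈ ℝ^n, and let f : ℝ^{n−2} → ℝ be a function differentiable at a point t = (t_1, …, t_{n−2}). Define s(t) := a_1 + t_1(a_2 − a_1) + ⋯ + t_{n−2}(a_{n−1} − a_1) and r(t) := f(t) · s(t). Then the determinant of the n × n matrix whose columns are x, r(t), ∂r/∂t_1(t), …, ∂r/∂t_{n−2}(t) equals f(t)^{n−1} times the determinant of the n × n matrix whose columns are x, a_1, a_2, …, a_{n−1}. -/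
noncomputable section

/-- `s(t) = a₁ + t₁ (a₂ - a₁) + ⋯ + t_{n-2} (a_{n-1} - a₁)`, with `n = m + 2` and
0-based indexing of the `n - 1 = m + 1` vectors `a`. -/
def sMap (m : ℕ) (a : Fin (m + 1) → (Fin (m + 2) → ℝ)) :
    (Fin m → ℝ) → (Fin (m + 2) → ℝ) :=
  fun u => a 0 + ∑ i : Fin m, u i • (a i.succ - a 0)

/-- `r(t) = f(t) • s(t)`. -/
def rMap (m : ℕ) (a : Fin (m + 1) → (Fin (m + 2) → ℝ)) (f : (Fin m → ℝ) → ℝ) :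
    (Fin m → ℝ) → (Fin (m + 2) → ℝ) :=
  fun u => f u • sMap m a u

/-- The matrix with the given columns. -/
def matrixOfColumns (m : ℕ) (c : Fin m → (Fin m → ℝ)) : Matrix (Fin m) (Fin m) ℝ :=
  Matrix.of fun j k => c k j

/-!
By the product rule `∂ᵢr = (∂ᵢf) s + f (a_{i+1} - a₁)`. Expressed in the columns
`x, s, a_{i+1} - a₁`, the columns `x, f s, ∂ᵢr` form an upper triangular matrix with diagonal
`1, f, …, f`, which accounts for the factor `f^{n-1}`. Finally `s - a₁` is a combination of the
`a_{i+1} - a₁`, so it may be replaced by `a₁`, and adding `a₁` back to the other columns does not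
change the determinant either.
-/

open Matrix

section Columns

variable {n : ℕ}

@[simp]
lemma col_matrixOfColumns (c : Fin n → Fin n → ℝ) : (matrixOfColumns n c).col = c := rfl

lemma det_matrixOfColumns_mulVec (A : Matrix (Fin n) (Fin n) ℝ) (w : Fin n → Fin n → ℝ) :
    (matrixOfColumns n fun k => A *ᵥ w k).det = A.det * (matrixOfColumns n w).det := by
  rw [← det_mul]
  rfl

lemma det_cons_cons_smul_add (x u : Fin (n + 2) → ℝ) (v : Fin n → Fin (n + 2) → ℝ)
    (c : ℝ) (d : Fin n → ℝ) :
    (matrixOfColumns (n + 2) (Fin.cons x (Fin.cons (c • u) fun i => d i • u + c • v i))).det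
      = c ^ (n + 1) * (matrixOfColumns (n + 2) (Fin.cons x (Fin.cons u v))).det := by
  set A := matrixOfColumns (n + 2) (Fin.cons x (Fin.cons u v))
  set e : Fin (n + 2) → Fin (n + 2) → ℝ := fun k => Pi.single k 1
  -- the new columns are `A` times an upper triangular matrix with diagonal `1, c, …, c`
  set w : Fin (n + 2) → Fin (n + 2) → ℝ :=
    Fin.cons (e 0) (Fin.cons (c • e 1) fun i => d i • e 1 + c • e i.succ.succ)
  set T := matrixOfColumns (n + 2) w
  have hcols : (Fin.cons x (Fin.cons (c • u) fun i => d i • u + c • v i) : Fin (n + 2) → _)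
      = fun k => A *ᵥ w k := by
    funext k
    refine Fin.cases ?_ (fun k => Fin.cases ?_ (fun i => ?_) k) k <;>
      simp [w, e, A, mulVec_add, mulVec_smul]
  have hT : T.IsUpperTriangular := by
    intro j k (hjk : k < j)
    refine Fin.cases (fun hjk => ?_) (fun k => Fin.cases (fun hjk => ?_) (fun i hjk => ?_) k) k hjk
    · simp [T, w, e, matrixOfColumns, Pi.single_eq_of_ne hjk.ne']
    · rw [Fin.succ_zero_eq_one] at hjk
      simp [T, w, e, matrixOfColumns, Pi.single_eq_of_ne hjk.ne']
    · have hone : (1 : Fin (n + 2)) < i.succ.succ := by simp [Fin.lt_def]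
      simp [T, w, e, matrixOfColumns, Pi.single_eq_of_ne hjk.ne',
        Pi.single_eq_of_ne (hone.trans hjk).ne']
  rw [hcols, det_matrixOfColumns_mulVec, det_of_isUpperTriangular hT,
    Fin.prod_univ_succ, Fin.prod_univ_succ]
  simp [T, w, e, matrixOfColumns, Pi.single_eq_of_ne (Fin.succ_succ_ne_one _)]
  ring

lemma det_cons_cons_sub (x u : Fin (n + 2) → ℝ) (v : Fin n → Fin (n + 2) → ℝ) :
    (matrixOfColumns (n + 2) (Fin.cons x (Fin.cons u fun i => v i - u))).det
      = (matrixOfColumns (n + 2) (Fin.cons x (Fin.cons u v))).det := by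
  simpa [sub_eq_neg_add] using det_cons_cons_smul_add x u v 1 (fun _ => -1)

lemma det_cons_cons_add_sum_smul (x u : Fin (n + 2) → ℝ) (v : Fin n → Fin (n + 2) → ℝ)
    (t : Fin n → ℝ) :
    (matrixOfColumns (n + 2) (Fin.cons x (Fin.cons (u + ∑ i, t i • v i) v))).det
      = (matrixOfColumns (n + 2) (Fin.cons x (Fin.cons u v))).det := by
  set A := matrixOfColumns (n + 2) (Fin.cons x (Fin.cons u v))
  have hsum := det_updateCol_sum A 1 (Fin.cons 0 (Fin.cons 1 t))
  simp only [← Fin.succ_zero_eq_one, Fin.cons_succ, Fin.cons_zero, one_smul] at hsum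
  rw [← hsum]
  congr 1
  ext r k
  refine Fin.cases ?_ (fun k => Fin.cases ?_ (fun i => ?_) k) k
  · simp [A, matrixOfColumns]
  · simp [A, matrixOfColumns, Fin.sum_univ_succ]
  · simp [A, matrixOfColumns, updateCol_ne (Fin.succ_succ_ne_one i)]

end Columns

section Derivative

variable {m : ℕ} (a : Fin (m + 1) → Fin (m + 2) → ℝ)

lemma hasFDerivAt_sMap (t : Fin m → ℝ) :
    HasFDerivAt (sMap m a)
      (∑ i, (ContinuousLinearMap.proj (R := ℝ) i).smulRight (a i.succ - a 0)) t :=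
  (HasFDerivAt.fun_sum fun i _ => (hasFDerivAt_apply i t).smul_const (a i.succ - a 0)).const_add
    (a 0)

lemma fderiv_rMap_single {f : (Fin m → ℝ) → ℝ} {t : Fin m → ℝ} (hf : DifferentiableAt ℝ f t)
    (i : Fin m) :
    fderiv ℝ (rMap m a f) t (Pi.single i 1)
      = fderiv ℝ f t (Pi.single i 1) • sMap m a t + f t • (a i.succ - a 0) := by
  have hr : HasFDerivAt (rMap m a f) _ t := hf.hasFDerivAt.smul (hasFDerivAt_sMap a t)
  rw [hr.fderiv]
  simp [Pi.single_apply, add_comm]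

end Derivative

theorem stmt13_general (m : ℕ)
    (a : Fin (m + 1) → (Fin (m + 2) → ℝ)) (x : Fin (m + 2) → ℝ)
    (f : (Fin m → ℝ) → ℝ) (t : Fin m → ℝ)
    (hf : DifferentiableAt ℝ f t) :
    Matrix.det (matrixOfColumns (m + 2)
        (Fin.cons x (Fin.cons (rMap m a f t)
          (fun i : Fin m => fderiv ℝ (rMap m a f) t (Pi.single i 1)))))
      = f t ^ (m + 1) * Matrix.det (matrixOfColumns (m + 2) (Fin.cons x a)) := by
  simp only [fderiv_rMap_single a hf]
  rw [rMap, det_cons_cons_smul_add, sMap, det_cons_cons_add_sum_smul, det_cons_cons_sub,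
    ← Fin.tail_def, Fin.cons_self_tail]

/-- The determinant of the `n × n` matrix whose columns are
`x, r(t), ∂r/∂t₁(t), …, ∂r/∂t_{n-2}(t)` equals `f(t)^{n-1}` times the determinant of the
matrix with columns `x, a₁, …, a_{n-1}` (here `n = m + 2`, `m ≥ 1`, i.e. `n ≥ 3`). -/
theorem stmt13 (m : ℕ) (hm : 1 ≤ m)
    (a : Fin (m + 1) → (Fin (m + 2) → ℝ)) (x : Fin (m + 2) → ℝ)
    (f : (Fin m → ℝ) → ℝ) (t : Fin m → ℝ)
    (hf : DifferentiableAt ℝ f t) :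
    Matrix.det (matrixOfColumns (m + 2)
        (Fin.cons x (Fin.cons (rMap m a f t)
          (fun i : Fin m => fderiv ℝ (rMap m a f) t (Pi.single i 1)))))
      = f t ^ (m + 1) * Matrix.det (matrixOfColumns (m + 2) (Fin.cons x a)) :=
  stmt13_general m a x f t hf
end
end

section
/- Let n ≥ 3 and fix vectors v_1, …, v_{n+1} ∈ ℝ^n with ⟪v_i, v_j⟫ = 1 if i = j and −1/n if i ≠ j, and let △^n = conv{v_1, …, v_{n+1}}. Let K ⊂ ℝ^n be a convex body with g(K) = K for every g ∈ SO(△^n). Let 2 ≤ k ≤ n−1 and let x be a point of the boundary of K lying in span{v_1, …, v_{k−1}}. If the gauge function μ_K is differentiable at x, then ∇μ_K(x) ∈ span{v_1, …, v_{k−1}}. -/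
/-!
A 3-cycle `σ` of the vertices outside `H = span {v i | i < k - 1}` is induced by a linear isometry
`g`; since `g ^ 3 = 1` we have `det g = 1`, so `g` preserves `K`, hence `gauge K`, and it fixes `x`.
Therefore `g` fixes the gradient `y`, so `⟪v a, y⟫ = ⟪v (σ a), y⟫`: the inner products of `y` with
all vertices outside `H` coincide. Because `∑ v i = 0` and `y = n / (n + 1) • ∑ ⟪v i, y⟫ • v i`,
subtracting this common value from every coefficient writes `y` as a combination of vertices in `H`.
-/

noncomputable section

def IsConvexBody {n : ℕ} (K : Set (EuclideanSpace ℝ (Fin n))) : Prop :=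
  IsCompact K ∧ Convex ℝ K ∧ (interior K).Nonempty

open Finset Module
open scoped InnerProductSpace

theorem LinearMap.det_eq_one_of_pow_eq_one {R M : Type*} [CommRing R] [LinearOrder R]
    [IsStrictOrderedRing R] [AddCommGroup M] [Module R M] {f : M →ₗ[R] M} {m : ℕ} (hm : Odd m)
    (h : f ^ m = 1) : LinearMap.det f = 1 :=
  hm.pow_injective (by simp only [← map_pow, h, map_one, one_pow])

theorem gauge_image_linearEquiv {E F : Type*} [AddCommGroup E] [Module ℝ E] [AddCommGroup F]
    [Module ℝ F] (g : E ≃ₗ[ℝ] F) (s : Set E) (x : E) : gauge (g '' s) (g x) = gauge s x := by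
  simp only [gauge_def, ← image_smul_set, g.injective.mem_set_image]

theorem HasGradientAt.map_eq_of_comp_eq {E : Type*} [NormedAddCommGroup E]
    [InnerProductSpace ℝ E] [CompleteSpace E] {f : E → ℝ} {x y : E} (hy : HasGradientAt f y x)
    (g : E ≃ₗᵢ[ℝ] E) (hf : f ∘ g = f) (hx : g x = x) : g y = y := by
  have hcomp := (hx.symm ▸ hy.hasFDerivAt).comp x g.toContinuousLinearEquiv.hasFDerivAt
  rw [hf] at hcomp
  have hinv : ∀ u, ⟪y, g u⟫_ℝ = ⟪y, u⟫_ℝ := fun u => by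
    simpa using DFunLike.congr_fun (hcomp.unique hy.hasFDerivAt) u
  refine ext_inner_right ℝ fun w => ?_
  rw [g.inner_map_eq_flip, ← hinv, g.apply_symm_apply]

variable {E : Type*} [NormedAddCommGroup E] [InnerProductSpace ℝ E]

def IsRegularSimplexFrame {n : ℕ} (v : Fin (n + 1) → E) : Prop :=
  ∀ i j, ⟪v i, v j⟫_ℝ = if i = j then (1 : ℝ) else -1 / n

namespace IsRegularSimplexFrame

variable {n : ℕ} {v : Fin (n + 1) → E}

theorem inner_sum_smul (hv : IsRegularSimplexFrame v) (c : Fin (n + 1) → ℝ) (j : Fin (n + 1)) :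
    ⟪v j, ∑ i, c i • v i⟫_ℝ = c j + (c j - ∑ i, c i) / n := by
  have hterm : ∀ i, c i * ⟪v j, v i⟫_ℝ = -(c i / n) + if j = i then c i + c i / n else 0 := by
    intro i
    rw [hv]
    split_ifs <;> ring
  simp only [inner_sum, real_inner_smul_right, hterm, sum_add_distrib, sum_ite_eq, mem_univ,
    if_true, sum_neg_distrib, ← sum_div]
  ring

theorem sum_eq_zero (hv : IsRegularSimplexFrame v) (hn : n ≠ 0) : ∑ i, v i = 0 := by
  have h : ∀ j, ⟪v j, ∑ i, v i⟫_ℝ = 0 := fun j => by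
    have := hv.inner_sum_smul 1 j
    simp only [Pi.one_apply, one_smul, sum_const, card_univ, Fintype.card_fin, nsmul_eq_mul,
      mul_one, Nat.cast_add, Nat.cast_one] at this
    rw [this]
    field_simp
    ring
  exact inner_self_eq_zero (𝕜 := ℝ).mp (by rw [sum_inner]; exact Finset.sum_eq_zero fun j _ => h j)

theorem linearIndependent_castSucc (hv : IsRegularSimplexFrame v) :
    LinearIndependent ℝ (v ∘ Fin.castSucc) := by
  rw [Fintype.linearIndependent_iff]
  intro c hc i
  obtain rfl | hn := eq_or_ne n 0
  · exact i.elim0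
  set d : Fin (n + 1) → ℝ := Fin.snoc c 0
  have hd : ∑ j, d j • v j = 0 := by simpa [Fin.sum_univ_castSucc, d] using hc
  have hconst : ∀ j, d j * (n + 1) = ∑ j, d j := fun j => by
    have := hv.inner_sum_smul d j
    rw [hd, inner_zero_right] at this
    field_simp at this
    linarith
  have hlast := hconst (Fin.last n)
  have hi := hconst i.castSucc
  simp only [d, Fin.snoc_last, Fin.snoc_castSucc, zero_mul] at hlast hi
  rw [← hlast] at hi
  exact (mul_eq_zero.mp hi).resolve_right (by positivity)

variable [FiniteDimensional ℝ E]

def basis (hv : IsRegularSimplexFrame v) (hE : finrank ℝ E = n) : Basis (Fin n) ℝ E :=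
  basisOfLinearIndependentOfCardEqFinrank' _ hv.linearIndependent_castSucc (by simp [hE])

@[simp]
theorem coe_basis (hv : IsRegularSimplexFrame v) (hE : finrank ℝ E = n) :
    ⇑(hv.basis hE) = v ∘ Fin.castSucc :=
  coe_basisOfLinearIndependentOfCardEqFinrank' ..

theorem eq_smul_sum_inner_smul (hv : IsRegularSimplexFrame v) (hn : n ≠ 0)
    (hE : finrank ℝ E = n) (u : E) : u = ((n : ℝ) / (n + 1)) • ∑ i, ⟪v i, u⟫_ℝ • v i := by
  refine InnerProductSpace.ext_inner_left_basis (hv.basis hE) fun i => ?_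
  have hsum : ∑ j, ⟪v j, u⟫_ℝ = 0 := by rw [← sum_inner, hv.sum_eq_zero hn, inner_zero_left]
  simp only [coe_basis, Function.comp_apply, real_inner_smul_right, hv.inner_sum_smul, hsum]
  field_simp
  ring

theorem mem_span_image_of_inner_eq (hv : IsRegularSimplexFrame v) (hn : n ≠ 0)
    (hE : finrank ℝ E = n) {S : Set (Fin (n + 1))} {y : E} {t : ℝ}
    (ht : ∀ i ∉ S, ⟪v i, y⟫_ℝ = t) : y ∈ Submodule.span ℝ (v '' S) := by
  have hy : y = ((n : ℝ) / (n + 1)) • ∑ i, (⟪v i, y⟫_ℝ - t) • v i := by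
    simpa only [sub_smul, sum_sub_distrib, ← smul_sum, hv.sum_eq_zero hn, smul_zero, sub_zero]
      using hv.eq_smul_sum_inner_smul hn hE y
  rw [hy]
  refine Submodule.smul_mem _ _ (Submodule.sum_mem _ fun i _ => ?_)
  by_cases hi : i ∈ S
  · exact Submodule.smul_mem _ _ (Submodule.subset_span ⟨i, hi, rfl⟩)
  · rw [ht i hi, sub_self, zero_smul]
    exact Submodule.zero_mem _

theorem exists_linearMap_apply_eq (hv : IsRegularSimplexFrame v) (hn : n ≠ 0)
    (hE : finrank ℝ E = n) (σ : Equiv.Perm (Fin (n + 1))) :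
    ∃ L : E →ₗ[ℝ] E, ∀ j, L (v j) = v (σ j) := by
  set L := (hv.basis hE).constr ℝ fun i => v (σ i.castSucc)
  have hcast : ∀ i : Fin n, L (v i.castSucc) = v (σ i.castSucc) := fun i => by
    simpa only [coe_basis, Function.comp_apply]
      using (hv.basis hE).constr_basis ℝ (fun i => v (σ i.castSucc)) i
  refine ⟨L, fun j => ?_⟩
  induction j using Fin.lastCases with
  | cast i => exact hcast i
  | last =>
    have h := hv.sum_eq_zero hn
    have hσ : ∑ j, v (σ j) = 0 := (Equiv.sum_comp σ v).trans h
    rw [Fin.sum_univ_castSucc] at h hσ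
    rw [eq_neg_of_add_eq_zero_right h, eq_neg_of_add_eq_zero_right hσ, map_neg, map_sum]
    simp only [hcast]

theorem exists_linearIsometryEquiv_apply_eq (hv : IsRegularSimplexFrame v) (hn : n ≠ 0)
    (hE : finrank ℝ E = n) (σ : Equiv.Perm (Fin (n + 1))) :
    ∃ g : E ≃ₗᵢ[ℝ] E, ∀ j, g (v j) = v (σ j) := by
  obtain ⟨L, hL⟩ := hv.exists_linearMap_apply_eq hn hE σ
  have hinner : (innerₗ E).compl₁₂ L L = innerₗ E :=
    LinearMap.ext_basis (hv.basis hE) (hv.basis hE) fun i j => by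
      simp [hL, hv _ _]
  refine ⟨(L.isometryOfInner fun a b => ?_).toLinearIsometryEquiv rfl, hL⟩
  simpa using DFunLike.congr_fun (DFunLike.congr_fun hinner a) b

theorem inner_eq_of_hasGradientAt (hv : IsRegularSimplexFrame v) (hn : n ≠ 0)
    (hE : finrank ℝ E = n) {f : E → ℝ}
    (hf : ∀ g : E ≃ₗᵢ[ℝ] E, LinearMap.det (g.toLinearEquiv : E →ₗ[ℝ] E) = 1 →
      g '' convexHull ℝ (Set.range v) = convexHull ℝ (Set.range v) → f ∘ g = f)
    {S : Set (Fin (n + 1))} {x y : E} (hx : x ∈ Submodule.span ℝ (v '' S))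
    (hy : HasGradientAt f y x) {a b c : Fin (n + 1)} (hab : a ≠ b) (hac : a ≠ c) (hbc : b ≠ c)
    (ha : a ∉ S) (hb : b ∉ S) (hc : c ∉ S) : ⟪v a, y⟫_ℝ = ⟪v b, y⟫_ℝ := by
  set σ := Equiv.swap a b * Equiv.swap a c
  obtain ⟨g, hg⟩ := hv.exists_linearIsometryEquiv_apply_eq hn hE σ
  have hσ3 : σ ^ 3 = 1 := by
    rw [← (Equiv.Perm.isThreeCycle_swap_mul_swap_same hab hac hbc).orderOf]
    exact pow_orderOf_eq_one σ
  have hdet : LinearMap.det (g.toLinearEquiv : E →ₗ[ℝ] E) = 1 := by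
    refine LinearMap.det_eq_one_of_pow_eq_one (m := 3) (by decide) ((hv.basis hE).ext fun i => ?_)
    have := congrArg (fun τ : Equiv.Perm (Fin (n + 1)) => v (τ i.castSucc)) hσ3
    simpa [pow_succ, hg] using this
  have hhull : g '' convexHull ℝ (Set.range v) = convexHull ℝ (Set.range v) := by
    have himage := (g.toLinearEquiv : E →ₗ[ℝ] E).image_convexHull (Set.range v)
    simp only [LinearEquiv.coe_coe, LinearIsometryEquiv.coe_toLinearEquiv] at himage
    rw [himage, ← Set.range_comp, show ⇑g ∘ v = v ∘ σ from funext hg, σ.surjective.range_comp]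
  have hgx : g x = x := by
    refine LinearMap.eqOn_span (f := (g.toLinearEquiv : E →ₗ[ℝ] E)) (g := LinearMap.id) ?_ hx
    rintro _ ⟨i, hi, rfl⟩
    simp only [LinearEquiv.coe_coe, LinearIsometryEquiv.coe_toLinearEquiv, LinearMap.id_apply, hg,
      σ, Equiv.Perm.mul_apply]
    rw [Equiv.swap_apply_of_ne_of_ne (ne_of_mem_of_not_mem hi ha) (ne_of_mem_of_not_mem hi hc),
      Equiv.swap_apply_of_ne_of_ne (ne_of_mem_of_not_mem hi ha) (ne_of_mem_of_not_mem hi hb)]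
  have hgy : g y = y := hy.map_eq_of_comp_eq g (hf g hdet hhull) hgx
  have hσb : σ b = a := by
    simp [σ, Equiv.swap_apply_of_ne_of_ne hab.symm hbc]
  calc ⟪v a, y⟫_ℝ = ⟪g (v b), g y⟫_ℝ := by rw [hg, hσb, hgy]
    _ = ⟪v b, y⟫_ℝ := g.inner_map_map _ _

end IsRegularSimplexFrame

theorem stmt14_general (n : ℕ) (hn : 3 ≤ n) (v : Fin (n + 1) → EuclideanSpace ℝ (Fin n))
    (hv : ∀ i j : Fin (n + 1), inner ℝ (v i) (v j) = if i = j then (1 : ℝ) else -1 / n)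
    (K : Set (EuclideanSpace ℝ (Fin n)))
    (hsym : ∀ g : EuclideanSpace ℝ (Fin n) ≃ₗᵢ[ℝ] EuclideanSpace ℝ (Fin n),
      LinearMap.det (g.toLinearEquiv : EuclideanSpace ℝ (Fin n) →ₗ[ℝ] EuclideanSpace ℝ (Fin n)) = 1 →
      g '' convexHull ℝ (Set.range v) = convexHull ℝ (Set.range v) → g '' K = K)
    (k : ℕ) (hkn : k ≤ n - 1)
    (x : EuclideanSpace ℝ (Fin n))
    (hxH : x ∈ Submodule.span ℝ (v '' {i : Fin (n + 1) | (i : ℕ) < k - 1}))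
    (y : EuclideanSpace ℝ (Fin n)) (hy : HasGradientAt (gauge K) y x) :
    y ∈ Submodule.span ℝ (v '' {i : Fin (n + 1) | (i : ℕ) < k - 1}) := by
  have hv : IsRegularSimplexFrame v := hv
  have hn0 : n ≠ 0 := by omega
  have hE : finrank ℝ (EuclideanSpace ℝ (Fin n)) = n := finrank_euclideanSpace_fin
  have hgauge : ∀ g : EuclideanSpace ℝ (Fin n) ≃ₗᵢ[ℝ] EuclideanSpace ℝ (Fin n),
      LinearMap.det (g.toLinearEquiv : EuclideanSpace ℝ (Fin n) →ₗ[ℝ] _) = 1 →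
      g '' convexHull ℝ (Set.range v) = convexHull ℝ (Set.range v) →
      gauge K ∘ g = gauge K := fun g hdet hhull => funext fun z => by
    rw [Function.comp_apply, ← gauge_image_linearEquiv g.toLinearEquiv K z,
      LinearIsometryEquiv.coe_toLinearEquiv, hsym g hdet hhull]
  set S := {i : Fin (n + 1) | (i : ℕ) < k - 1}
  have hS : ∀ i : Fin (n + 1), i ∉ S ↔ k - 1 ≤ i := fun i => by simp [S]
  refine hv.mem_span_image_of_inner_eq hn0 hE (t := ⟪v (Fin.last n), y⟫_ℝ) fun a ha => ?_
  obtain rfl | hal := eq_or_ne a (Fin.last n)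
  · rfl
  obtain ⟨c, hc, hca, hcl⟩ : ∃ c : Fin (n + 1), k - 1 ≤ c ∧ c ≠ a ∧ c ≠ Fin.last n := by
    have := (hS a).mp ha
    refine ⟨⟨if (a : ℕ) = n - 1 then n - 2 else n - 1, by split_ifs <;> omega⟩, ?_, ?_, ?_⟩ <;>
      simp only [ne_eq, Fin.ext_iff, Fin.val_last] <;> split_ifs <;> omega
  exact hv.inner_eq_of_hasGradientAt hn0 hE hgauge hxH hy hal hca.symm hcl.symm ha
    ((hS _).mpr (by rw [Fin.val_last]; omega)) ((hS c).mpr hc)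

theorem stmt14 (n : ℕ) (hn : 3 ≤ n) (v : Fin (n + 1) → EuclideanSpace ℝ (Fin n))
    (hv : ∀ i j : Fin (n + 1), inner ℝ (v i) (v j) = if i = j then (1 : ℝ) else -1 / n)
    (K : Set (EuclideanSpace ℝ (Fin n)))
    (hK : IsConvexBody K)
    (hsym : ∀ g : EuclideanSpace ℝ (Fin n) ≃ₗᵢ[ℝ] EuclideanSpace ℝ (Fin n),
      LinearMap.det (g.toLinearEquiv : EuclideanSpace ℝ (Fin n) →ₗ[ℝ] EuclideanSpace ℝ (Fin n)) = 1 →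
      g '' convexHull ℝ (Set.range v) = convexHull ℝ (Set.range v) → g '' K = K)
    (k : ℕ) (hk2 : 2 ≤ k) (hkn : k ≤ n - 1)
    (x : EuclideanSpace ℝ (Fin n)) (hxK : x ∈ frontier K)
    (hxH : x ∈ Submodule.span ℝ (v '' {i : Fin (n + 1) | (i : ℕ) < k - 1}))
    (y : EuclideanSpace ℝ (Fin n)) (hy : HasGradientAt (gauge K) y x) :
    y ∈ Submodule.span ℝ (v '' {i : Fin (n + 1) | (i : ℕ) < k - 1}) :=
  stmt14_general n hn v hv K hsym k hkn x hxH y hy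
end
end
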